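/- Fix 1 ≤ p ≤ ∞. Let F : ℝ × ℝ³ → ℂ be measurable and define the retarded potential (WF)(t,x) := ∫_{ℝ³} F(t − |x−y|, y)/(4π|x−y|) dy, which is the Duhamel term ∫_{s<t} sin((t−s)√(−Δ))/√(−Δ) F(s) ds for the free wave equation. Then for every x ∈ ℝ³, ‖(WF)(·,x)‖_{L^p_t(ℝ)} ≤ (1/4π) ∫_{ℝ³} ‖F(·,y)‖_{L^p_t(ℝ)} / |x−y| dy. Consequently ‖WF‖_{L^∞_x L^p_t} ≤ (1/4π) ‖ y ↦ ‖F(·,y)‖_{L^p_t} ‖_K, where ‖·‖_K is the Kato norm. -/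

import Mathlib

set_option autoImplicit false

open MeasureTheory ENNReal Real

noncomputable section

/-- `ℝ³` as a Euclidean space. -/
abbrev R3 : Type := EuclideanSpace ℝ (Fin 3)

/-- The retarded potential: the Duhamel term
`(WF)(t,x) = ∫_{ℝ³} F(t − |x−y|, y)/(4π|x−y|) dy` for the free wave equation. -/
def retardedPotential (F : ℝ → R3 → ℂ) (t : ℝ) (x : R3) : ℂ :=
  ∫ y : R3, (4 * π * ‖x - y‖)⁻¹ • F (t - ‖x - y‖) y

/-- The (global) Kato norm of a nonnegative (extended-real-valued) function on `ℝ³`. -/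
def katoNormE (g : R3 → ℝ≥0∞) : ℝ≥0∞ :=
  ⨆ y : R3, ∫⁻ x : R3, g x / (‖x - y‖₊ : ℝ≥0∞)

/-!
The retarded potential at a fixed point `x` is an integral over `y` of the time-translates
`t ↦ F(t - |x - y|, y)` weighted by `1 / (4π|x - y|)`. By Minkowski's integral inequality the
`L^p_t` norm of such an integral is at most the integral of the `L^p_t` norms, and translation in
time does not change `‖F(·, y)‖_{L^p_t}`; this is the pointwise bound. Taking the supremum over `x`
turns the right-hand side into the Kato norm.
-/

open Filter Topology Function

section Minkowski

variable {α β : Type*} [MeasurableSpace α] [MeasurableSpace β] {μ : Measure α} {ν : Measure β}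

lemma ENNReal.rpow_one_div_le_of_le_rpow_mul {p q : ℝ} (hpq : p.HolderConjugate q)
    {a R : ℝ≥0∞} (ha : a ≠ ∞) (h : a ≤ a ^ (1 / q) * R) : a ^ (1 / p) ≤ R := by
  rcases eq_or_ne a 0 with rfl | ha0
  · rw [ENNReal.zero_rpow_of_pos (one_div_pos.2 hpq.pos)]
    exact zero_le
  have hq_pos : a ^ (1 / q) ≠ 0 := (ENNReal.rpow_pos (pos_iff_ne_zero.2 ha0) ha).ne'
  have hq_fin : a ^ (1 / q) ≠ ∞ :=
    ENNReal.rpow_ne_top_of_nonneg (one_div_nonneg.2 hpq.symm.nonneg) ha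
  refine (ENNReal.mul_le_mul_iff_left hq_pos hq_fin).1 ?_
  rwa [← ENNReal.rpow_add _ _ ha0 ha, hpq.one_div_add_one_div, div_one, ENNReal.rpow_one,
    mul_comm]

/-- Hölder's inequality against `g ^ (p - 1) ∈ L^q` bounds `∫⁻ g ^ p` by `(∫⁻ g ^ p) ^ (1/q)` times
the right-hand side. -/
lemma lintegral_rpow_le_of_le_lintegral [SFinite μ] [SFinite ν] {H : α → β → ℝ≥0∞}
    (hH : Measurable (uncurry H)) {p : ℝ} (hp : 1 < p) {g : α → ℝ≥0∞} (hg : Measurable g)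
    (hg_le : ∀ t, g t ≤ ∫⁻ y, H t y ∂ν) (hg_fin : ∫⁻ t, g t ^ p ∂μ ≠ ∞) :
    (∫⁻ t, g t ^ p ∂μ) ^ (1 / p) ≤ ∫⁻ y, (∫⁻ t, H t y ^ p ∂μ) ^ (1 / p) ∂ν := by
  have hpq := Real.HolderConjugate.conjExponent hp
  set q := p.conjExponent
  set I := ∫⁻ t, g t ^ p ∂μ
  refine ENNReal.rpow_one_div_le_of_le_rpow_mul hpq hg_fin ?_
  have hgp : ∀ t, g t ^ p = g t ^ (p - 1) * g t := fun t => by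
    have := ENNReal.rpow_add_of_nonneg (x := g t) (p - 1) 1 (by linarith) zero_le_one
    rwa [sub_add_cancel, ENNReal.rpow_one] at this
  have hgq : ∫⁻ t, (g t ^ (p - 1)) ^ q ∂μ = I := by
    congr 1 with t
    rw [← ENNReal.rpow_mul, hpq.sub_one_mul_conj]
  have hg' : Measurable fun t => g t ^ (p - 1) := hg.pow_const _
  calc I = ∫⁻ t, g t ^ (p - 1) * g t ∂μ := lintegral_congr hgp
    _ ≤ ∫⁻ t, ∫⁻ y, g t ^ (p - 1) * H t y ∂ν ∂μ := lintegral_mono fun t => by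
        rw [lintegral_const_mul _ hH.of_uncurry_left]
        gcongr
        exact hg_le t
    _ = ∫⁻ y, ∫⁻ t, g t ^ (p - 1) * H t y ∂μ ∂ν :=
        lintegral_lintegral_swap ((hg'.comp measurable_fst).mul hH).aemeasurable
    _ ≤ ∫⁻ y, I ^ (1 / q) * (∫⁻ t, H t y ^ p ∂μ) ^ (1 / p) ∂ν := by
        refine lintegral_mono fun y => ?_
        rw [← hgq]
        exact ENNReal.lintegral_mul_le_Lp_mul_Lq μ hpq.symm hg'.aemeasurable
          hH.of_uncurry_right.aemeasurable
    _ = I ^ (1 / q) * ∫⁻ y, (∫⁻ t, H t y ^ p ∂μ) ^ (1 / p) ∂ν :=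
        lintegral_const_mul' _ _
          (ENNReal.rpow_ne_top_of_nonneg (one_div_nonneg.2 hpq.symm.nonneg) hg_fin)

/-- The Hölder argument behind Minkowski's inequality divides by `∫⁻ g ^ p`, so it only applies to
minorants with finite integral; on a σ-finite space these exhaust `φ`. -/
lemma lintegral_rpow_le_of_forall_le_of_ne_top [SigmaFinite μ] {φ : α → ℝ≥0∞}
    (hφ : Measurable φ) {p : ℝ} (hp : 0 < p) {C : ℝ≥0∞}
    (h : ∀ g : α → ℝ≥0∞, Measurable g → g ≤ φ → ∫⁻ t, g t ^ p ∂μ ≠ ∞ →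
      ∫⁻ t, g t ^ p ∂μ ≤ C) :
    ∫⁻ t, φ t ^ p ∂μ ≤ C := by
  set g : ℕ → α → ℝ≥0∞ := fun n => (spanningSets μ n).indicator fun t => min (φ t) n
  have hg_meas : ∀ n, Measurable (g n) := fun n =>
    (hφ.min measurable_const).indicator (measurableSet_spanningSets μ n)
  have hg_le : ∀ n, g n ≤ φ := fun n => Set.indicator_le fun t _ => min_le_left _ _
  have hg_mono : ∀ t, Monotone fun n => g n t ^ p := fun t m n hmn => by
    refine ENNReal.rpow_le_rpow ?_ hp.le
    refine (Set.indicator_le_indicator_of_subset (monotone_spanningSets μ hmn)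
      (fun _ => zero_le) t).trans (Set.indicator_le_indicator ?_)
    gcongr
  have hg_fin : ∀ n, ∫⁻ t, g n t ^ p ∂μ ≠ ∞ := fun n => by
    refine ne_top_of_le_ne_top ?_ (lintegral_mono (g := (spanningSets μ n).indicator
      fun _ => (n : ℝ≥0∞) ^ p) fun t => ?_)
    · rw [lintegral_indicator_const (measurableSet_spanningSets μ n)]
      exact ENNReal.mul_ne_top (by simp [hp.le]) (measure_spanningSets_lt_top μ n).ne
    · by_cases ht : t ∈ spanningSets μ n
      · simp only [g, Set.indicator_of_mem ht]
        gcongr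
        exact min_le_right _ _
      · simp [g, Set.indicator_of_notMem ht, ENNReal.zero_rpow_of_pos hp]
  have hg_tendsto : ∀ t, Tendsto (fun n => g n t ^ p) atTop (𝓝 (φ t ^ p)) := fun t => by
    have hmin : Tendsto (fun n : ℕ => min (φ t) n) atTop (𝓝 (φ t)) := by
      simpa using tendsto_const_nhds.min ENNReal.tendsto_nat_nhds_top
    refine (ENNReal.continuous_rpow_const.tendsto _).comp (hmin.congr' ?_)
    exact (eventually_mem_spanningSets μ t).mono fun n hn =>
      (Set.indicator_of_mem hn (fun t => min (φ t) n)).symm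
  exact le_of_tendsto' (lintegral_tendsto_of_tendsto_of_monotone
      (fun n => ((hg_meas n).pow_const p).aemeasurable) (ae_of_all _ hg_mono)
      (ae_of_all _ hg_tendsto))
    fun n => h _ (hg_meas n) (hg_le n) (hg_fin n)

theorem lintegral_rpow_lintegral_le [SigmaFinite μ] [SFinite ν] {H : α → β → ℝ≥0∞}
    (hH : Measurable (uncurry H)) {p : ℝ} (hp : 1 ≤ p) :
    (∫⁻ t, (∫⁻ y, H t y ∂ν) ^ p ∂μ) ^ (1 / p) ≤ ∫⁻ y, (∫⁻ t, H t y ^ p ∂μ) ^ (1 / p) ∂ν := by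
  rcases hp.eq_or_lt with rfl | hp
  · simpa using (lintegral_lintegral_swap hH.aemeasurable).le
  have hp0 : 0 < p := one_pos.trans hp
  rw [one_div, ENNReal.rpow_inv_le_iff hp0]
  refine lintegral_rpow_le_of_forall_le_of_ne_top hH.lintegral_prod_right' hp0
    fun g hg hgφ hg_fin => ?_
  rw [← ENNReal.rpow_inv_le_iff hp0, ← one_div]
  exact lintegral_rpow_le_of_le_lintegral hH hp hg hgφ hg_fin

theorem essSup_lintegral_le [SigmaFinite μ] [SFinite ν] {H : α → β → ℝ≥0∞}
    (hH : Measurable (uncurry H)) :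
    essSup (fun t => ∫⁻ y, H t y ∂ν) μ ≤ ∫⁻ y, essSup (fun t => H t y) μ ∂ν := by
  refine essSup_le_of_ae_le _ (ae_le_of_forall_setLIntegral_le_of_sigmaFinite
    hH.lintegral_prod_right' fun s _ hs => ?_)
  calc ∫⁻ t in s, ∫⁻ y, H t y ∂ν ∂μ = ∫⁻ y, ∫⁻ t in s, H t y ∂μ ∂ν :=
        lintegral_lintegral_swap hH.aemeasurable
    _ ≤ ∫⁻ y, essSup (fun t => H t y) μ * μ s ∂ν := lintegral_mono fun y =>
        (lintegral_mono_ae (ae_restrict_of_ae (ENNReal.ae_le_essSup _))).trans_eq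
          (setLIntegral_const _ _)
    _ = ∫⁻ _ in s, ∫⁻ y, essSup (fun t => H t y) μ ∂ν ∂μ := by
        rw [lintegral_mul_const' _ _ hs.ne, setLIntegral_const]

theorem eLpNorm_integral_le_lintegral_eLpNorm [SigmaFinite μ] [SFinite ν] {E : Type*}
    [NormedAddCommGroup E] [NormedSpace ℝ E] [MeasurableSpace E] [OpensMeasurableSpace E]
    {f : α → β → E} (hf : Measurable (uncurry f)) {p : ℝ≥0∞} (hp : 1 ≤ p) :
    eLpNorm (fun t => ∫ y, f t y ∂ν) p μ ≤ ∫⁻ y, eLpNorm (fun t => f t y) p μ ∂ν := by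
  have hH : Measurable (uncurry fun t y => ‖f t y‖ₑ) := hf.enorm
  have hpt : ∀ t, ‖∫ y, f t y ∂ν‖ₑ ≤ ∫⁻ y, ‖f t y‖ₑ ∂ν := fun t =>
    enorm_integral_le_lintegral_enorm _
  rcases eq_or_ne p ∞ with rfl | hp_top
  · simp only [eLpNorm_exponent_top, eLpNormEssSup]
    exact (essSup_mono_ae (ae_of_all _ hpt)).trans (essSup_lintegral_le hH)
  have hp0 : p ≠ 0 := (zero_lt_one.trans_le hp).ne'
  have hp1 : 1 ≤ p.toReal := by simpa using ENNReal.toReal_mono hp_top hp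
  simp only [eLpNorm_eq_lintegral_rpow_enorm_toReal hp0 hp_top]
  calc _ ≤ (∫⁻ t, (∫⁻ y, ‖f t y‖ₑ ∂ν) ^ p.toReal ∂μ) ^ (1 / p.toReal) := by
        gcongr
        exact hpt _
    _ ≤ _ := lintegral_rpow_lintegral_le hH hp1

end Minkowski

theorem eLpNorm_comp_sub_right {G E : Type*} [MeasurableSpace G] [AddGroup G] [MeasurableAdd G]
    [NormedAddCommGroup E] {μ : Measure G} [μ.IsAddRightInvariant] {g : G → E}
    (hg : AEStronglyMeasurable g μ) (r : G) (p : ℝ≥0∞) :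
    eLpNorm (fun t => g (t - r)) p μ = eLpNorm g p μ :=
  eLpNorm_comp_measurePreserving hg (measurePreserving_sub_right μ r)

theorem enorm_inv_le {𝕜 : Type*} [NormedDivisionRing 𝕜] (a : 𝕜) : ‖a⁻¹‖ₑ ≤ ‖a‖ₑ⁻¹ := by
  rcases eq_or_ne a 0 with rfl | ha
  · simp
  · exact (enorm_inv ha).le

/-- Only an inequality: at `y = x` the kernel takes the junk value `0⁻¹ = 0`. -/
lemma eLpNorm_retardedIntegrand_le {F : ℝ → R3 → ℂ} (hF : Measurable (uncurry F))
    (x y : R3) (p : ℝ≥0∞) :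
    eLpNorm (fun t => (4 * π * ‖x - y‖)⁻¹ • F (t - ‖x - y‖) y) p volume ≤
      (ENNReal.ofReal (4 * π))⁻¹ * (eLpNorm (fun t => F t y) p volume / ‖x - y‖₊) := by
  rw [show (fun t => (4 * π * ‖x - y‖)⁻¹ • F (t - ‖x - y‖) y) =
      (4 * π * ‖x - y‖)⁻¹ • fun t => F (t - ‖x - y‖) y from rfl, eLpNorm_const_smul,
    eLpNorm_comp_sub_right hF.of_uncurry_right.aestronglyMeasurable]
  calc ‖(4 * π * ‖x - y‖)⁻¹‖ₑ * eLpNorm (fun t => F t y) p volume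
      ≤ ‖4 * π * ‖x - y‖‖ₑ⁻¹ * eLpNorm (fun t => F t y) p volume := by
        gcongr
        exact enorm_inv_le _
    _ = _ := by
      rw [enorm_mul, ENNReal.mul_inv (.inr enorm_ne_top) (.inl enorm_ne_top),
        Real.enorm_eq_ofReal (by positivity), enorm_norm, enorm_eq_nnnorm, div_eq_mul_inv]
      ring

theorem eLpNorm_retardedPotential_le {p : ℝ≥0∞} (hp : 1 ≤ p) {F : ℝ → R3 → ℂ}
    (hF : Measurable (uncurry F)) (x : R3) :
    eLpNorm (fun t => retardedPotential F t x) p volume ≤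
      (ENNReal.ofReal (4 * π))⁻¹ *
        ∫⁻ y, eLpNorm (fun t => F t y) p volume / (‖x - y‖₊ : ℝ≥0∞) := by
  have hmeas : Measurable
      (uncurry fun t (y : R3) => (4 * π * ‖x - y‖)⁻¹ • F (t - ‖x - y‖) y) := by fun_prop
  calc _ ≤ ∫⁻ y, eLpNorm (fun t => (4 * π * ‖x - y‖)⁻¹ • F (t - ‖x - y‖) y) p volume :=
        eLpNorm_integral_le_lintegral_eLpNorm hmeas hp
    _ ≤ ∫⁻ y, (ENNReal.ofReal (4 * π))⁻¹ *
          (eLpNorm (fun t => F t y) p volume / (‖x - y‖₊ : ℝ≥0∞)) :=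
        lintegral_mono fun y => eLpNorm_retardedIntegrand_le hF x y p
    _ = _ := lintegral_const_mul' _ _ (ENNReal.inv_ne_top.2 (by simp [Real.pi_pos]))

lemma lintegral_div_nnnorm_sub_le_katoNormE (g : R3 → ℝ≥0∞) (x : R3) :
    ∫⁻ y, g y / (‖x - y‖₊ : ℝ≥0∞) ≤ katoNormE g := by
  simp_rw [← enorm_eq_nnnorm, enorm_sub_rev x]
  exact le_iSup (fun z => ∫⁻ y, g y / (‖y - z‖₊ : ℝ≥0∞)) x

theorem retarded_potential_reversed_estimate (p : ℝ≥0∞) (hp : 1 ≤ p)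
    (F : ℝ → R3 → ℂ) (hF : Measurable (Function.uncurry F)) :
    (∀ x : R3,
      eLpNorm (fun t => retardedPotential F t x) p volume ≤
        (ENNReal.ofReal (4 * π))⁻¹ *
          ∫⁻ y : R3, eLpNorm (fun t => F t y) p volume / (‖x - y‖₊ : ℝ≥0∞)) ∧
    essSup (fun x : R3 => eLpNorm (fun t => retardedPotential F t x) p volume) volume ≤
      (ENNReal.ofReal (4 * π))⁻¹ *
        katoNormE (fun y => eLpNorm (fun t => F t y) p volume) := by
  refine ⟨eLpNorm_retardedPotential_le hp hF, essSup_le_of_ae_le _ (ae_of_all _ fun x => ?_)⟩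
  dsimp only
  grw [eLpNorm_retardedPotential_le hp hF x, lintegral_div_nnnorm_sub_le_katoNormE]
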